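/- Let S be a finite nonempty set, c a cost function, and {i,j} ∈ binom(S,2). If c_{ij} ≤ Σ_{{p,q}∈δ({i,j})∩P^−} c_{pq} + Σ_{{p,q,r}∈T_{δ({i,j})}∩T^−} c_{pqr}, then there exists an optimal solution x* of min_{x∈X_S} φ_c(x) such that x*_{ij} = 1. -/
import Mathlib


open Finset

/-- `binom(S,2)`: the set of 2-element subsets (unordered pairs) of the ground set. -/
def pairs (V : Type*) [Fintype V] [DecidableEq V] : Finset (Finset V) :=
  (univ : Finset V).powersetCard 2

/-- `binom(S,3)`: the set of 3-element subsets (unordered triples) of the ground set. -/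
def triples (V : Type*) [Fintype V] [DecidableEq V] : Finset (Finset V) :=
  (univ : Finset V).powersetCard 3

/-- The feasible set `X_S`: maps `x : binom(S,2) → {0,1}` satisfying the triangle
inequalities `x_{pq} + x_{qr} - x_{pr} ≤ 1` for all pairwise distinct `p, q, r`. -/
def feasible {V : Type*} [Fintype V] [DecidableEq V] (x : Finset V → ℝ) : Prop :=
  (∀ e ∈ pairs V, x e = 0 ∨ x e = 1) ∧
    ∀ p q r : V, p ≠ q → q ≠ r → p ≠ r →
      x {p, q} + x {q, r} - x {p, r} ≤ 1

/-- The cubic objective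
`φ_c(x) = Σ_{{p,q,r}} c_{pqr} x_{pq} x_{pr} x_{qr} + Σ_{{p,q}} c_{pq} x_{pq} + c_∅`. -/
def obj {V : Type*} [Fintype V] [DecidableEq V] (c x : Finset V → ℝ) : ℝ :=
  ∑ t ∈ triples V, c t * ∏ e ∈ t.powersetCard 2, x e
    + ∑ e ∈ pairs V, c e * x e + c ∅

/-- `δ(R)`: the pairs having exactly one element in `R`. -/
def cut {V : Type*} [Fintype V] [DecidableEq V] (R : Finset V) : Finset (Finset V) :=
  (pairs V).filter fun e => (e ∩ R).card = 1

/-- `T_{P'}`: the triples having some 2-element subset in `P'`. -/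
def Tof {V : Type*} [Fintype V] [DecidableEq V] (P' : Finset (Finset V)) :
    Finset (Finset V) :=
  (triples V).filter fun t => ∃ e ∈ t.powersetCard 2, e ∈ P'

section Aux

variable {V : Type*} [Fintype V] [DecidableEq V]

lemma mem_pairs_iff {e : Finset V} : e ∈ pairs V ↔ e.card = 2 := by
  simp [pairs, Finset.mem_powersetCard]

lemma pair_mem_pairs {p q : V} (h : p ≠ q) : ({p, q} : Finset V) ∈ pairs V := by
  simp [mem_pairs_iff, Finset.card_pair h]

lemma sub_mem_pairs {t e : Finset V} (ht : t ∈ triples V) (he : e ∈ t.powersetCard 2) :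
    e ∈ pairs V := by
  rw [Finset.mem_powersetCard] at he
  exact mem_pairs_iff.2 he.2

lemma obj_congr (c x y : Finset V → ℝ) (h : ∀ e ∈ pairs V, x e = y e) :
    obj c x = obj c y := by
  unfold obj
  congr 1
  congr 1
  · refine Finset.sum_congr rfl fun t ht => ?_
    congr 1
    exact Finset.prod_congr rfl fun e he => h e (sub_mem_pairs ht he)
  · exact Finset.sum_congr rfl fun e he => by rw [h e he]

lemma self_not_mem_cut {i j : V} (hij : i ≠ j) : ({i, j} : Finset V) ∉ cut {i, j} := by
  intro hmem
  rw [cut, Finset.mem_filter, Finset.inter_self, Finset.card_pair hij] at hmem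
  exact absurd hmem.2 (by norm_num)

lemma pair_mem_cut {i j p q : V} (hpq : p ≠ q) (hp : p ∈ ({i, j} : Finset V))
    (hq : q ∉ ({i, j} : Finset V)) : ({p, q} : Finset V) ∈ cut {i, j} := by
  rw [cut, Finset.mem_filter]
  refine ⟨pair_mem_pairs hpq, ?_⟩
  have hint : ({p, q} : Finset V) ∩ {i, j} = {p} := by
    ext a
    simp only [Finset.mem_inter, Finset.mem_insert, Finset.mem_singleton]
    constructor
    · rintro ⟨h1, h2⟩
      rcases h1 with rfl | rfl
      · rfl
      · exact absurd h2 (by simpa using hq)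
    · rintro rfl
      exact ⟨Or.inl rfl, by simpa using hp⟩
  rw [hint, Finset.card_singleton]

lemma pair_eq_of_mem {i j p q : V} (hpq : p ≠ q) (hp : p ∈ ({i, j} : Finset V))
    (hq : q ∈ ({i, j} : Finset V)) : ({p, q} : Finset V) = {i, j} := by
  apply Finset.eq_of_subset_of_card_le
  · intro a ha
    rcases Finset.mem_insert.1 ha with rfl | ha'
    · exact hp
    · rw [Finset.mem_singleton] at ha'; subst ha'; exact hq
  · calc ({i, j} : Finset V).card ≤ ({j} : Finset V).card + 1 := Finset.card_insert_le _ _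
      _ = 2 := by simp
      _ = ({p, q} : Finset V).card := (Finset.card_pair hpq).symm

lemma pair_not_cut {i j p q : V} (hp : p ∉ ({i, j} : Finset V))
    (hq : q ∉ ({i, j} : Finset V)) :
    ({p, q} : Finset V) ∉ cut {i, j} ∧ ({p, q} : Finset V) ≠ ({i, j} : Finset V) := by
  have hint : ({p, q} : Finset V) ∩ {i, j} = ∅ := by
    ext a
    simp only [Finset.mem_inter, Finset.mem_insert, Finset.mem_singleton,
      Finset.notMem_empty, iff_false, not_and]
    rintro (rfl | rfl) h2 <;> simp_all
  constructor
  · intro hmem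
    rw [cut, Finset.mem_filter, hint] at hmem
    simpa using hmem.2
  · intro hEq
    have hi : i ∈ ({p, q} : Finset V) := by rw [hEq]; simp
    rcases Finset.mem_insert.1 hi with h' | h'
    · exact hp (by simp [← h'])
    · rw [Finset.mem_singleton] at h'
      exact hq (by simp [← h'])

/-- The key modification step: given a feasible `x` with `x_{ij} = 0`, splitting off
`{i,j}` as its own cluster gives a feasible solution whose objective exceeds `obj c x`
by at most `c_{ij}` minus the negative cut/triple sums. -/
lemma key_step (c x : Finset V → ℝ) (i j : V) (hij : i ≠ j) (hx : feasible x)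
    (h0 : x {i, j} = 0) :
    ∃ f : Finset V → ℝ, feasible f ∧ f {i, j} = 1 ∧
      obj c f ≤ obj c x + c {i, j}
        - ∑ e ∈ (cut {i, j}).filter (fun e => c e < 0), c e
        - ∑ t ∈ (Tof (cut {i, j})).filter (fun t => c t < 0), c t := by
  classical
  set f : Finset V → ℝ :=
    fun e => if e = {i, j} then 1 else if e ∈ cut {i, j} then 0 else x e with hf
  have hv1 : f {i, j} = 1 := by rw [hf]; simp
  have hvalcut : ∀ e ∈ cut {i, j}, f e = 0 := by
    intro e he
    have hne : e ≠ ({i, j} : Finset V) := by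
      intro hEq; exact self_not_mem_cut hij (hEq ▸ he)
    rw [hf]; simp [hne, he]
  have hvalother : ∀ e, e ≠ ({i, j} : Finset V) → e ∉ cut {i, j} → f e = x e := by
    intro e h1 h2; rw [hf]; simp [h1, h2]
  have hx01 : ∀ e ∈ pairs V, 0 ≤ x e ∧ x e ≤ 1 := by
    intro e he; rcases hx.1 e he with h | h <;> rw [h] <;> norm_num
  -- feasibility
  have hfeas : feasible f := by
    constructor
    · intro e he
      by_cases h1 : e = ({i, j} : Finset V)
      · right; rw [hf]; simp [h1]
      by_cases h2 : e ∈ cut {i, j}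
      · left; exact hvalcut e h2
      · rw [hvalother e h1 h2]; exact hx.1 e he
    · intro p q r hpq hqr hpr
      by_cases hp : p ∈ ({i, j} : Finset V) <;>
        by_cases hq : q ∈ ({i, j} : Finset V) <;>
          by_cases hr : r ∈ ({i, j} : Finset V)
      · -- all three in {i,j}: impossible
        exfalso
        have hEq := pair_eq_of_mem hpq hp hq
        rw [← hEq] at hr
        rcases Finset.mem_insert.1 hr with h' | h'
        · exact hpr h'.symm
        · rw [Finset.mem_singleton] at h'; exact hqr h'.symm
      · -- p, q ∈, r ∉
        have e1 : f {p, q} = 1 := by rw [pair_eq_of_mem hpq hp hq]; exact hv1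
        have e2 : f {q, r} = 0 := hvalcut _ (pair_mem_cut hqr hq hr)
        have e3 : f {p, r} = 0 := hvalcut _ (pair_mem_cut hpr hp hr)
        rw [e1, e2, e3]; norm_num
      · -- p, r ∈, q ∉
        have e1 : f {p, q} = 0 := hvalcut _ (pair_mem_cut hpq hp hq)
        have e2 : f {q, r} = 0 := by
          rw [Finset.pair_comm]
          exact hvalcut _ (pair_mem_cut (Ne.symm hqr) hr hq)
        have e3 : f {p, r} = 1 := by rw [pair_eq_of_mem hpr hp hr]; exact hv1
        rw [e1, e2, e3]; norm_num
      · -- p ∈, q, r ∉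
        have e1 : f {p, q} = 0 := hvalcut _ (pair_mem_cut hpq hp hq)
        have e2 : f {q, r} = x {q, r} :=
          hvalother _ (pair_not_cut hq hr).2 (pair_not_cut hq hr).1
        have e3 : f {p, r} = 0 := hvalcut _ (pair_mem_cut hpr hp hr)
        rw [e1, e2, e3]
        have := (hx01 _ (pair_mem_pairs hqr)).2
        linarith
      · -- q, r ∈, p ∉
        have e1 : f {p, q} = 0 := by
          rw [Finset.pair_comm]
          exact hvalcut _ (pair_mem_cut (Ne.symm hpq) hq hp)
        have e2 : f {q, r} = 1 := by rw [pair_eq_of_mem hqr hq hr]; exact hv1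
        have e3 : f {p, r} = 0 := by
          rw [Finset.pair_comm]
          exact hvalcut _ (pair_mem_cut (Ne.symm hpr) hr hp)
        rw [e1, e2, e3]; norm_num
      · -- q ∈, p, r ∉
        have e1 : f {p, q} = 0 := by
          rw [Finset.pair_comm]
          exact hvalcut _ (pair_mem_cut (Ne.symm hpq) hq hp)
        have e2 : f {q, r} = 0 := hvalcut _ (pair_mem_cut hqr hq hr)
        have e3 : f {p, r} = x {p, r} :=
          hvalother _ (pair_not_cut hp hr).2 (pair_not_cut hp hr).1
        rw [e1, e2, e3]
        have := (hx01 _ (pair_mem_pairs hpr)).1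
        linarith
      · -- r ∈, p, q ∉
        have e1 : f {p, q} = x {p, q} :=
          hvalother _ (pair_not_cut hp hq).2 (pair_not_cut hp hq).1
        have e2 : f {q, r} = 0 := by
          rw [Finset.pair_comm]
          exact hvalcut _ (pair_mem_cut (Ne.symm hqr) hr hq)
        have e3 : f {p, r} = 0 := by
          rw [Finset.pair_comm]
          exact hvalcut _ (pair_mem_cut (Ne.symm hpr) hr hp)
        rw [e1, e2, e3]
        have := (hx01 _ (pair_mem_pairs hpq)).2
        linarith
      · -- none in {i,j}
        have e1 : f {p, q} = x {p, q} :=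
          hvalother _ (pair_not_cut hp hq).2 (pair_not_cut hp hq).1
        have e2 : f {q, r} = x {q, r} :=
          hvalother _ (pair_not_cut hq hr).2 (pair_not_cut hq hr).1
        have e3 : f {p, r} = x {p, r} :=
          hvalother _ (pair_not_cut hp hr).2 (pair_not_cut hp hr).1
        rw [e1, e2, e3]
        exact hx.2 p q r hpq hqr hpr
  -- sums
  have hcut_sub : cut {i, j} ⊆ pairs V := Finset.filter_subset _ _
  have hTof_sub : Tof (cut {i, j}) ⊆ triples V := Finset.filter_subset _ _
  have hfilter_cut : (pairs V).filter (fun e => e ∈ cut {i, j}) = cut {i, j} := by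
    ext e
    simp only [Finset.mem_filter, and_iff_right_iff_imp]
    exact fun he => hcut_sub he
  have hfilter_T : (triples V).filter (fun t => t ∈ Tof (cut {i, j})) = Tof (cut {i, j}) := by
    ext t
    simp only [Finset.mem_filter, and_iff_right_iff_imp]
    exact fun ht => hTof_sub ht
  have pairsum : ∑ e ∈ pairs V, c e * f e
      = ∑ e ∈ pairs V, c e * x e + c {i, j} - ∑ e ∈ cut {i, j}, c e * x e := by
    have hterm : ∀ e ∈ pairs V, c e * f e
        = c e * x e + (if e = ({i, j} : Finset V) then c e else 0)
          - (if e ∈ cut {i, j} then c e * x e else 0) := by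
      intro e he
      by_cases h1 : e = ({i, j} : Finset V)
      · subst h1
        rw [hv1, h0, if_pos rfl, if_neg (self_not_mem_cut hij)]
        ring
      · by_cases h2 : e ∈ cut {i, j}
        · rw [hvalcut e h2, if_neg h1, if_pos h2]; ring
        · rw [hvalother e h1 h2, if_neg h1, if_neg h2]; ring
    rw [Finset.sum_congr rfl hterm, Finset.sum_sub_distrib, Finset.sum_add_distrib]
    congr 1
    · congr 1
      rw [Finset.sum_ite_eq' (pairs V) ({i, j} : Finset V) c,
        if_pos (pair_mem_pairs hij)]
    · rw [← Finset.sum_filter, hfilter_cut]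
  have triplesum : ∑ t ∈ triples V, c t * ∏ e ∈ t.powersetCard 2, f e
      = ∑ t ∈ triples V, c t * ∏ e ∈ t.powersetCard 2, x e
        - ∑ t ∈ Tof (cut {i, j}), c t * ∏ e ∈ t.powersetCard 2, x e := by
    have hterm : ∀ t ∈ triples V, c t * ∏ e ∈ t.powersetCard 2, f e
        = c t * ∏ e ∈ t.powersetCard 2, x e
          - (if t ∈ Tof (cut {i, j}) then c t * ∏ e ∈ t.powersetCard 2, x e else 0) := by
      intro t ht
      by_cases hT : t ∈ Tof (cut {i, j})
      · have hT' := hT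
        rw [Tof, Finset.mem_filter] at hT'
        obtain ⟨e₀, he₀, hcut₀⟩ := hT'.2
        rw [if_pos hT, Finset.prod_eq_zero he₀ (hvalcut e₀ hcut₀)]
        ring
      · rw [if_neg hT, sub_zero]
        have hnone : ∀ e ∈ t.powersetCard 2, e ∉ cut {i, j} := by
          intro e he hc
          exact hT (by rw [Tof, Finset.mem_filter]; exact ⟨ht, e, he, hc⟩)
        have hne : ∀ e ∈ t.powersetCard 2, e ≠ ({i, j} : Finset V) := by
          intro e he hEq
          subst hEq
          rw [Finset.mem_powersetCard] at he
          have ht' := ht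
          rw [triples, Finset.mem_powersetCard] at ht'
          have hc2 : ({i, j} : Finset V).card = 2 := Finset.card_pair hij
          have hc3 : t.card = 3 := ht'.2
          have hnsub : ¬ t ⊆ ({i, j} : Finset V) := by
            intro hsub
            have := Finset.card_le_card hsub
            rw [hc2, hc3] at this
            omega
          obtain ⟨k, hkt, hknot⟩ := Finset.not_subset.1 hnsub
          have hik : i ≠ k := by
            intro hik; exact hknot (by rw [← hik]; simp)
          have hpair : ({i, k} : Finset V) ∈ t.powersetCard 2 := by
            rw [Finset.mem_powersetCard]
            refine ⟨?_, Finset.card_pair hik⟩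
            intro a ha
            rcases Finset.mem_insert.1 ha with rfl | ha'
            · exact he.1 (by simp)
            · rw [Finset.mem_singleton] at ha'; subst ha'; exact hkt
          exact hnone _ hpair (pair_mem_cut hik (by simp) hknot)
        congr 1
        exact Finset.prod_congr rfl fun e he => hvalother e (hne e he) (hnone e he)
    rw [Finset.sum_congr rfl hterm, Finset.sum_sub_distrib]
    congr 1
    rw [← Finset.sum_filter, hfilter_T]
  have hcutbound : ∑ e ∈ (cut {i, j}).filter (fun e => c e < 0), c e
      ≤ ∑ e ∈ cut {i, j}, c e * x e := by
    rw [Finset.sum_filter]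
    refine Finset.sum_le_sum fun e he => ?_
    obtain ⟨h0e, h1e⟩ := hx01 e (hcut_sub he)
    by_cases hc : c e < 0
    · rw [if_pos hc]; nlinarith
    · rw [if_neg hc]; push_neg at hc; exact mul_nonneg hc h0e
  have htripbound : ∑ t ∈ (Tof (cut {i, j})).filter (fun t => c t < 0), c t
      ≤ ∑ t ∈ Tof (cut {i, j}), c t * ∏ e ∈ t.powersetCard 2, x e := by
    rw [Finset.sum_filter]
    refine Finset.sum_le_sum fun t ht => ?_
    have hP0 : 0 ≤ ∏ e ∈ t.powersetCard 2, x e :=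
      Finset.prod_nonneg fun e he => (hx01 e (sub_mem_pairs (hTof_sub ht) he)).1
    have hP1 : ∏ e ∈ t.powersetCard 2, x e ≤ 1 :=
      Finset.prod_le_one (fun e he => (hx01 e (sub_mem_pairs (hTof_sub ht) he)).1)
        (fun e he => (hx01 e (sub_mem_pairs (hTof_sub ht) he)).2)
    by_cases hc : c t < 0
    · rw [if_pos hc]; nlinarith
    · rw [if_neg hc]; push_neg at hc; exact mul_nonneg hc hP0
  refine ⟨f, hfeas, hv1, ?_⟩
  unfold obj
  linarith [pairsum, triplesum, hcutbound, htripbound]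

end Aux

/--
Let `S` be a finite nonempty set, `c` a cost function, and
`{i,j} ∈ binom(S,2)`.  If
`c_{ij} ≤ Σ_{{p,q} ∈ δ({i,j}) ∩ P⁻} c_{pq} + Σ_{{p,q,r} ∈ T_{δ({i,j})} ∩ T⁻} c_{pqr}`,
then there exists an optimal solution `x*` of `min_{x ∈ X_S} φ_c(x)` with `x*_{ij} = 1`.
-/
theorem edge_subgraph_join_persistency {V : Type*} [Fintype V] [DecidableEq V] [Nonempty V]
    (c : Finset V → ℝ) (i j : V) (hij : i ≠ j)
    (h : c {i, j} ≤
        ∑ e ∈ (cut {i, j}).filter (fun e => c e < 0), c e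
          + ∑ t ∈ (Tof (cut {i, j})).filter (fun t => c t < 0), c t) :
    ∃ xstar : Finset V → ℝ, feasible xstar ∧
      (∀ x : Finset V → ℝ, feasible x → obj c xstar ≤ obj c x) ∧
      xstar {i, j} = 1 := by
  classical
  -- the finite set of indicator candidates
  set ind : Finset (Finset V) → Finset V → ℝ :=
    fun A e => if e ∈ A then 1 else 0 with hind
  set D : Finset (Finset (Finset V)) :=
    (pairs V).powerset.filter (fun A => feasible (ind A)) with hD
  have hDne : D.Nonempty := by
    refine ⟨∅, ?_⟩
    rw [hD, Finset.mem_filter]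
    refine ⟨Finset.mem_powerset.2 (Finset.empty_subset _), ?_⟩
    constructor
    · intro e he; left; simp [hind]
    · intro p q r _ _ _; simp [hind]
  obtain ⟨A, hAD, hAmin⟩ := Finset.exists_min_image D (fun A => obj c (ind A)) hDne
  have hAfeas : feasible (ind A) := (Finset.mem_filter.1 hAD).2
  have hopt : ∀ y : Finset V → ℝ, feasible y → obj c (ind A) ≤ obj c y := by
    intro y hy
    set B : Finset (Finset V) := (pairs V).filter (fun e => y e = 1) with hB
    have hagree : ∀ e ∈ pairs V, ind B e = y e := by
      intro e he
      by_cases h1 : y e = 1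
      · rw [hind]; simp only []
        rw [if_pos (by rw [hB]; exact Finset.mem_filter.2 ⟨he, h1⟩), h1]
      · have h0 : y e = 0 := (hy.1 e he).resolve_right h1
        rw [hind]; simp only []
        rw [if_neg (by
          rw [hB]; intro hmem
          exact h1 (Finset.mem_filter.1 hmem).2), h0]
    have hBfeas : feasible (ind B) := by
      constructor
      · intro e he
        by_cases h1 : e ∈ B
        · right; simp [hind, h1]
        · left; simp [hind, h1]
      · intro p q r h1 h2 h3
        rw [hagree _ (pair_mem_pairs h1), hagree _ (pair_mem_pairs h2),
          hagree _ (pair_mem_pairs h3)]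
        exact hy.2 p q r h1 h2 h3
    have hBD : B ∈ D := by
      rw [hD, Finset.mem_filter]
      exact ⟨Finset.mem_powerset.2 (Finset.filter_subset _ _), hBfeas⟩
    calc obj c (ind A) ≤ obj c (ind B) := hAmin B hBD
      _ = obj c y := obj_congr c _ _ hagree
  have hmemij : ({i, j} : Finset V) ∈ pairs V := pair_mem_pairs hij
  rcases hAfeas.1 _ hmemij with h0 | h1
  · -- modify
    obtain ⟨f, hffeas, hf1, hfle⟩ := key_step c (ind A) i j hij hAfeas h0
    refine ⟨f, hffeas, ?_, hf1⟩
    intro y hy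
    have : obj c f ≤ obj c (ind A) := by linarith
    exact this.trans (hopt y hy)
  · exact ⟨ind A, hAfeas, hopt, h1⟩
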